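/- An atom Q(ē) belongs to I(P,M) if and only if there exists a derivation tree for Q(ē) without returns, where a derivation tree contains a return if two nodes, one a descendant of the other, justify the same atom of the form R?(d̄). -/

import Mathlib

/-!
Soundness is an induction on the derivation: a clause of `P^M` whose body lies in `I(P,M)` puts
its head in `I(P,M)`, since `I(P,M)` is a fixed point. For completeness, every atom of `I(P,M)`
enters at some finite stage `Fⁿ(∅)`, because clause bodies are finite. An atom entering at stage
`n + 1` is justified by a clause whose body atoms entered at stage `n`, so along each path of the
resulting tree the stages strictly decrease and no atom is justified twice.
-/

namespace ASP

/-- A ground clause `head ← pos, ¬neg` of an answer set program. -/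
structure GClause (α : Type) where
  head : α
  pos : List α
  neg : List α

variable {α : Type}

/-- Immediate-consequence operator of the Gelfond–Lifschitz reduct `P^M`:
`F(I) = I ∪ {a | some clause a ← a₁,…,aₙ of P^M has all aᵢ ∈ I}`. -/
def tcons (P : Set (GClause α)) (M : Set α) : Set α →o Set α where
  toFun I := I ∪ {a | ∃ c ∈ P, c.head = a ∧ (∀ b ∈ c.pos, b ∈ I) ∧ (∀ b ∈ c.neg, b ∉ M)}
  monotone' := by
    intro I J h x hx
    rcases hx with hx | ⟨c, hc, h1, h2, h3⟩
    · exact Or.inl (h hx)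
    · exact Or.inr ⟨c, hc, h1, fun b hb => h (h2 b hb), h3⟩

/-- The interpretation `I(P,M)`: least fixed point of the immediate-consequence
operator of the reduct `P^M`. -/
def interp (P : Set (GClause α)) (M : Set α) : Set α := OrderHom.lfp (tcons P M)

/-- `M` is a stable model (answer set) of `P` iff `M = I(P,M)`. -/
def IsStable (P : Set (GClause α)) (M : Set α) : Prop := M = interp P M

end ASP

/-- Derivation trees for an atom from `P̄ ∪ M̄` *without returns*: the visited
set V records the (clause-head) atoms justified on the path from the root, and
no atom may be justified twice on a path. -/
inductive DerivNR {α : Type} (P : Set (ASP.GClause α)) (M : Set α) :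
    Set α → α → Prop
  | mk {V : Set α} {a : α} (c : ASP.GClause α) :
      c ∈ P → c.head = a → a ∉ V → (∀ s ∈ c.neg, s ∉ M) →
      (∀ b ∈ c.pos, DerivNR P M (insert a V) b) → DerivNR P M V a

namespace ASP

variable {α : Type} {P : Set (GClause α)} {M : Set α}

variable (P M) in
def stage (n : ℕ) : Set α := (tcons P M)^[n] ∅

theorem stage_succ (n : ℕ) : stage P M (n + 1) = tcons P M (stage P M n) :=
  Function.iterate_succ_apply' _ _ _

theorem monotone_stage : Monotone (stage P M) :=
  monotone_nat_of_le_succ fun n => (stage_succ n).symm ▸ Set.subset_union_left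

theorem head_mem_stage_succ {c : GClause α} {n : ℕ} (hc : c ∈ P)
    (hpos : ∀ b ∈ c.pos, b ∈ stage P M n) (hneg : ∀ s ∈ c.neg, s ∉ M) :
    c.head ∈ stage P M (n + 1) := by
  rw [stage_succ]
  exact Or.inr ⟨c, hc, rfl, hpos, hneg⟩

theorem head_mem_interp {c : GClause α} (hc : c ∈ P) (hpos : ∀ b ∈ c.pos, b ∈ interp P M)
    (hneg : ∀ s ∈ c.neg, s ∉ M) : c.head ∈ interp P M := by
  rw [interp, ← OrderHom.map_lfp]
  exact Or.inr ⟨c, hc, rfl, hpos, hneg⟩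

theorem interp_subset_iUnion_stage : interp P M ⊆ ⋃ n, stage P M n := by
  classical
  refine OrderHom.lfp_le _ fun a ha => ?_
  rcases ha with ha | ⟨c, hc, rfl, hpos, hneg⟩
  · exact ha
  · obtain ⟨n, hn⟩ := monotone_stage.directed_le.exists_mem_subset_of_finset_subset_biUnion
      (s := c.pos.toFinset) fun b hb => hpos b (List.mem_toFinset.mp hb)
    exact Set.mem_iUnion.mpr
      ⟨n + 1, head_mem_stage_succ hc (fun b hb => hn (List.mem_toFinset.mpr hb)) hneg⟩

theorem derivNR_of_mem_stage {n : ℕ} {a : α} {V : Set α} (ha : a ∈ stage P M n)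
    (hV : Disjoint V (stage P M n)) : DerivNR P M V a := by
  induction n generalizing a V with
  | zero => exact absurd ha (Set.notMem_empty a)
  | succ n ih =>
    have hVn : Disjoint V (stage P M n) := hV.mono_right (monotone_stage n.le_succ)
    by_cases hold : a ∈ stage P M n
    · exact ih hold hVn
    rw [stage_succ] at ha
    rcases ha with ha | ⟨c, hc, rfl, hpos, hneg⟩
    · exact absurd ha hold
    · exact DerivNR.mk c hc rfl
        (fun haV => hV.notMem_of_mem_left haV (head_mem_stage_succ hc hpos hneg)) hneg
        fun b hb => ih (hpos b hb) (Set.disjoint_insert_left.mpr ⟨hold, hVn⟩)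

end ASP

theorem DerivNR.mem_interp {α : Type} {P : Set (ASP.GClause α)} {M : Set α} {V : Set α} {a : α}
    (h : DerivNR P M V a) : a ∈ ASP.interp P M := by
  induction h with
  | mk c hc hhead _ hneg _ ih => exact hhead ▸ ASP.head_mem_interp hc ih hneg

/-- An atom belongs to I(P,M) iff it has a derivation tree without returns. -/
theorem stmt11 {α : Type} (P : Set (ASP.GClause α)) (M : Set α) (a : α) :
    a ∈ ASP.interp P M ↔ DerivNR P M ∅ a := by
  refine ⟨fun ha => ?_, DerivNR.mem_interp⟩
  obtain ⟨n, hn⟩ := Set.mem_iUnion.mp (ASP.interp_subset_iUnion_stage ha)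
  exact ASP.derivNR_of_mem_stage hn (Set.empty_disjoint _)
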